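/- Theorem 1(ii) (characterization of the angle criterion): Suppose β* ∈ (0,1) satisfies Φ(β*) = ε. Then for every β ∈ [0,1], the angle criterion −⟪g, d(β)⟫ ≥ ε ‖g‖ ‖d(β)‖ holds if and only if β ≤ β*. -/

import Mathlib

open scoped RealInnerProductSpace

noncomputable def dvec {n : ℕ} (g d : EuclideanSpace ℝ (Fin n)) (ξ β : ℝ) :
    EuclideanSpace ℝ (Fin n) :=
  β • d - ((1 - β) * ξ) • g

noncomputable def Phi {n : ℕ} (g d : EuclideanSpace ℝ (Fin n)) (ξ β : ℝ) : ℝ :=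
  -⟪g, dvec g d ξ β⟫ / (‖g‖ * ‖dvec g d ξ β‖)

/-!
Write `N(β) = -⟪g, d(β)⟫` and let `K = ‖g‖²‖d‖² - ⟪g, d⟫²` be the Gram determinant of `g, d`,
which is positive by linear independence. Since `d(β) = β • d - c • g`, the Gram determinant of
`g, d(β)` is `β² K`, so `‖g‖ ‖d(β)‖ = √(N(β)² + β² K)`. For `β > 0` this gives
`Φ(β) = sin (arctan (N(β) / (β √K)))`, and `N(β) / β = ξ ‖g‖² / β - (ξ ‖g‖² + ⟪g, d⟫)` is strictly
decreasing, while `Φ(0) = 1`. Hence `Φ` is strictly decreasing on `[0, ∞)`.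
-/

open Real Set

section Gram

variable {E : Type*} [NormedAddCommGroup E] [InnerProductSpace ℝ E]

def gramDet (x y : E) : ℝ := ‖x‖ ^ 2 * ‖y‖ ^ 2 - ⟪x, y⟫ ^ 2

theorem gramDet_pos_of_linearIndependent {x y : E} (h : LinearIndependent ℝ ![x, y]) :
    0 < gramDet x y := by
  have hx : x ≠ 0 := h.ne_zero 0
  have hy : y ≠ 0 := h.ne_zero 1
  have hlt : |⟪x, y⟫| < ‖x‖ * ‖y‖ := by
    refine (abs_real_inner_le_norm x y).lt_of_ne fun heq => ?_
    obtain ⟨r, -, rfl⟩ := (norm_inner_eq_norm_iff (𝕜 := ℝ) hx hy).mp (by rwa [Real.norm_eq_abs])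
    have := LinearIndependent.pair_iff.mp h r (-1) (by simp)
    norm_num at this
  have := sq_lt_sq' (neg_lt_of_abs_lt hlt) (lt_of_abs_lt hlt)
  rw [gramDet, ← mul_pow]
  linarith

theorem gramDet_smul_sub_smul (x y : E) (a b : ℝ) :
    gramDet x (a • y - b • x) = a ^ 2 * gramDet x y := by
  simp only [gramDet, ← real_inner_self_eq_norm_sq, inner_sub_left, inner_sub_right,
    real_inner_smul_left, real_inner_smul_right, real_inner_comm x y]
  ring

theorem norm_mul_norm_eq_sqrt (x y : E) :
    ‖x‖ * ‖y‖ = √((-⟪x, y⟫) ^ 2 + gramDet x y) := by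
  rw [gramDet, neg_sq, add_sub_cancel, ← mul_pow, sqrt_sq (by positivity)]

end Gram

theorem sin_arctan_lt_one (x : ℝ) : sin (arctan x) < 1 := by
  rw [← sin_pi_div_two]
  exact strictMonoOn_sin ⟨(neg_pi_div_two_lt_arctan x).le, (arctan_lt_pi_div_two x).le⟩
    ⟨by linarith [pi_pos], le_rfl⟩ (arctan_lt_pi_div_two x)

theorem div_sqrt_sq_add_sq_mul_eq_sin_arctan {N β K : ℝ} (hβ : 0 < β) (hK : 0 < K) :
    N / √(N ^ 2 + β ^ 2 * K) = sin (arctan (N / (β * √K))) := by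
  have hβK : 0 < β * √K := by positivity
  have hsq : 1 + (N / (β * √K)) ^ 2 = (N ^ 2 + β ^ 2 * K) / (β * √K) ^ 2 := by
    rw [div_pow, mul_pow, sq_sqrt hK.le]
    field_simp
    ring
  have hsqrt : √(1 + (N / (β * √K)) ^ 2) = √(N ^ 2 + β ^ 2 * K) / (β * √K) := by
    rw [hsq, sqrt_div' _ (sq_nonneg _), sqrt_sq hβK.le]
  rw [sin_arctan, hsqrt, div_div_div_cancel_right₀ hβK.ne']

section Angle

variable {n : ℕ} {g d : EuclideanSpace ℝ (Fin n)} {ξ : ℝ}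

theorem neg_inner_dvec (β : ℝ) :
    -⟪g, dvec g d ξ β⟫ = (1 - β) * ξ * ‖g‖ ^ 2 - β * ⟪g, d⟫ := by
  rw [dvec, inner_sub_right, real_inner_smul_right, real_inner_smul_right,
    real_inner_self_eq_norm_sq]
  ring

theorem norm_mul_norm_dvec (β : ℝ) :
    ‖g‖ * ‖dvec g d ξ β‖ = √((-⟪g, dvec g d ξ β⟫) ^ 2 + β ^ 2 * gramDet g d) := by
  rw [norm_mul_norm_eq_sqrt, dvec, gramDet_smul_sub_smul]

theorem dvec_ne_zero (hind : LinearIndependent ℝ ![g, d]) (hξ : ξ ≠ 0) (β : ℝ) :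
    dvec g d ξ β ≠ 0 := by
  intro h
  obtain ⟨h1, rfl⟩ := LinearIndependent.pair_iff.mp hind (-((1 - β) * ξ)) β
    (by rw [← h, dvec]; module)
  simp [hξ] at h1

theorem Phi_zero (hg : g ≠ 0) (hξ : 0 < ξ) : Phi g d ξ 0 = 1 := by
  have : 0 < ξ * ‖g‖ ^ 2 := by positivity
  rw [Phi, norm_mul_norm_dvec, neg_inner_dvec]
  simp [sqrt_sq this.le, this.ne']

theorem Phi_eq_sin_arctan (hind : LinearIndependent ℝ ![g, d]) {β : ℝ} (hβ : 0 < β) :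
    Phi g d ξ β = sin (arctan (-⟪g, dvec g d ξ β⟫ / (β * √(gramDet g d)))) := by
  rw [Phi, norm_mul_norm_dvec,
    div_sqrt_sq_add_sq_mul_eq_sin_arctan hβ (gramDet_pos_of_linearIndependent hind)]

theorem strictAntiOn_neg_inner_dvec_div (hg : g ≠ 0) (hξ : 0 < ξ) :
    StrictAntiOn (fun β => -⟪g, dvec g d ξ β⟫ / β) (Ioi 0) := by
  intro β₁ (h₁ : 0 < β₁) β₂ _ hlt
  have hdiv (β : ℝ) (hβ : 0 < β) :
      -⟪g, dvec g d ξ β⟫ / β = ξ * ‖g‖ ^ 2 / β - (ξ * ‖g‖ ^ 2 + ⟪g, d⟫) := by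
    rw [neg_inner_dvec]
    field_simp
    ring
  simp only [hdiv β₁ h₁, hdiv β₂ (h₁.trans hlt)]
  gcongr

theorem strictAntiOn_Phi (hind : LinearIndependent ℝ ![g, d]) (hξ : 0 < ξ) :
    StrictAntiOn (Phi g d ξ) (Ici 0) := by
  have hg : g ≠ 0 := hind.ne_zero 0
  have hK : 0 < √(gramDet g d) := sqrt_pos.mpr (gramDet_pos_of_linearIndependent hind)
  intro β₁ (h₁ : 0 ≤ β₁) β₂ _ hlt
  rcases h₁.eq_or_lt with rfl | h₁
  · rw [Phi_zero hg hξ, Phi_eq_sin_arctan hind hlt]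
    exact sin_arctan_lt_one _
  · rw [Phi_eq_sin_arctan hind h₁, Phi_eq_sin_arctan hind (h₁.trans hlt)]
    refine sin_arctan_strictMono ?_
    simp only [← div_div]
    exact div_lt_div_of_pos_right
      (strictAntiOn_neg_inner_dvec_div (d := d) hg hξ h₁ (h₁.trans hlt) hlt) hK

theorem le_Phi_iff (hind : LinearIndependent ℝ ![g, d]) (hξ : ξ ≠ 0) (ε β : ℝ) :
    ε ≤ Phi g d ξ β ↔ ε * ‖g‖ * ‖dvec g d ξ β‖ ≤ -⟪g, dvec g d ξ β⟫ := by
  have hpos : 0 < ‖g‖ * ‖dvec g d ξ β‖ :=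
    mul_pos (norm_pos_iff.mpr (hind.ne_zero 0)) (norm_pos_iff.mpr (dvec_ne_zero hind hξ β))
  rw [Phi, le_div_iff₀ hpos, mul_assoc]

end Angle

theorem angle_criterion_iff_le_critical_general {n : ℕ} (g d : EuclideanSpace ℝ (Fin n))
    (hind : LinearIndependent ℝ ![g, d]) (ε ξ : ℝ)
    (hξ : 0 < ξ)
    (βs : ℝ) (hβs : βs ∈ Set.Ioo (0 : ℝ) 1) (hPhi : Phi g d ξ βs = ε) :
    ∀ β ∈ Set.Icc (0 : ℝ) 1,
      (-⟪g, dvec g d ξ β⟫ ≥ ε * ‖g‖ * ‖dvec g d ξ β‖ ↔ β ≤ βs) := by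
  intro β hβ
  rw [ge_iff_le, ← le_Phi_iff hind hξ.ne', ← hPhi]
  exact (strictAntiOn_Phi hind hξ).le_iff_ge hβs.1.le hβ.1

/-- Theorem 1(ii): if Φ(βs) = ε with βs ∈ (0,1), then for every β ∈ [0,1] the angle
criterion −⟪g, d(β)⟫ ≥ ε ‖g‖ ‖d(β)‖ holds if and only if β ≤ βs. -/
theorem angle_criterion_iff_le_critical {n : ℕ} (g d : EuclideanSpace ℝ (Fin n))
    (hind : LinearIndependent ℝ ![g, d]) (ε ξ : ℝ)
    (hε : ε ∈ Set.Ioo (0 : ℝ) 1) (hξ : 0 < ξ)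
    (hviol : -⟪g, d⟫ < ε * ‖g‖ * ‖d‖)
    (βs : ℝ) (hβs : βs ∈ Set.Ioo (0 : ℝ) 1) (hPhi : Phi g d ξ βs = ε) :
    ∀ β ∈ Set.Icc (0 : ℝ) 1,
      (-⟪g, dvec g d ξ β⟫ ≥ ε * ‖g‖ * ‖dvec g d ξ β‖ ↔ β ≤ βs) :=
  angle_criterion_iff_le_critical_general g d hind ε ξ hξ βs hβs hPhi
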